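/- (Appendix, equation (12a).) For every subcarrier p ∈ {0,…,N−1}, E[ conj(h̄(p)) · H̄^{ICI}_{pp} ] = 1 − τ_av/N. -/

import Mathlib

/-
Both `h̄(p)` and `H̄^{ICI}_{pp}` are linear combinations of the taps, so, the taps being
uncorrelated, the expectation collapses to the diagonal `∑ ρ(ℓ) · conj(aₗ) · bₗ`. Here `aₗ` is the
phase `e^{-2πiℓp/N}`; on the diagonal `q = p` the ICI phase is the same `e^{-2πiℓp/N}` for every `n`,
so `bₗ = aₗ · #{n < N | ℓ ≤ n} / N = aₗ · (N - ℓ)/N`. As `|aₗ| = 1`, the expectation is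
`∑ ρ(ℓ)(N - ℓ)/N = 1 - τ_av/N`.
-/

open Finset MeasureTheory

/-- Frequency-domain channel coefficient `h̄(p) = ∑_{ℓ=0}^{L-1} h(ℓ)·e^{-2πiℓp/N}`. -/
noncomputable def hBar {Ω : Type*} (N L : ℕ) (h : ℕ → Ω → ℂ) (p : ℕ) (ω : Ω) : ℂ :=
  ∑ ℓ ∈ range L, h ℓ ω *
    Complex.exp (-(2 * (Real.pi : ℂ) * Complex.I * (ℓ : ℂ) * (p : ℂ)) / (N : ℂ))

/-- Frequency-domain ICI matrix entry
`H̄^{ICI}_{pq} = (1/N)·∑_{n=0}^{N-1} ∑_{ℓ=0}^{L-1} h(ℓ)·e^{2πi(nq-ℓq-np)/N}·𝟙[ℓ ≤ n]`. -/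
noncomputable def Hici {Ω : Type*} (N L : ℕ) (h : ℕ → Ω → ℂ) (p q : ℕ) (ω : Ω) : ℂ :=
  (1 / (N : ℂ)) * ∑ n ∈ range N, ∑ ℓ ∈ range L,
    h ℓ ω * Complex.exp (2 * (Real.pi : ℂ) * Complex.I *
      ((((n * q : ℕ) : ℤ) - ((ℓ * q : ℕ) : ℤ) - ((n * p : ℕ) : ℤ) : ℤ) : ℂ) / (N : ℂ)) *
    (if ℓ ≤ n then 1 else 0)

open ComplexConjugate

lemma integral_conj_sum_mul_sum_of_uncorrelated {Ω ι : Type*} [MeasurableSpace Ω]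
    {μ : Measure Ω} [DecidableEq ι] (s : Finset ι) (h : ι → Ω → ℂ)
    (ρ a b : ι → ℂ)
    (hint : ∀ i ∈ s, ∀ j ∈ s, Integrable (fun ω => h i ω * conj (h j ω)) μ)
    (hcov : ∀ i ∈ s, ∀ j ∈ s, ∫ ω, h i ω * conj (h j ω) ∂μ = if i = j then ρ i else 0) :
    ∫ ω, conj (∑ j ∈ s, h j ω * a j) * ∑ i ∈ s, h i ω * b i ∂μ
      = ∑ i ∈ s, ρ i * (conj (a i) * b i) := by
  have hexpand : ∀ ω, conj (∑ j ∈ s, h j ω * a j) * ∑ i ∈ s, h i ω * b i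
      = ∑ i ∈ s, ∑ j ∈ s, h i ω * conj (h j ω) * (conj (a j) * b i) := by
    intro ω
    simp only [map_sum, map_mul, sum_mul, mul_sum]
    exact sum_congr rfl fun _ _ => sum_congr rfl fun _ _ => by ring
  simp_rw [hexpand]
  rw [integral_finsetSum _ fun i hi => integrable_finsetSum _ fun j hj =>
    (hint i hi j hj).mul_const _]
  refine sum_congr rfl fun i hi => ?_
  rw [integral_finsetSum _ fun j hj => (hint i hi j hj).mul_const _]
  simp_rw [integral_mul_const]
  rw [sum_congr rfl fun j hj => by rw [hcov i hi j hj], sum_eq_single_of_mem i hi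
    fun j _ hji => by rw [if_neg (Ne.symm hji), zero_mul], if_pos rfl]

lemma sum_range_ite_le (N ℓ : ℕ) :
    ∑ n ∈ range N, (if ℓ ≤ n then (1 : ℂ) else 0) = ((N - ℓ : ℕ) : ℂ) := by
  rw [sum_boole, show (range N).filter (ℓ ≤ ·) = Ico ℓ N by ext; simp [and_comm],
    Nat.card_Ico]

lemma conj_exp_phase_mul_self (N ℓ p : ℕ) :
    conj (Complex.exp (-(2 * (Real.pi : ℂ) * Complex.I * ℓ * p) / N))
      * Complex.exp (-(2 * (Real.pi : ℂ) * Complex.I * ℓ * p) / N) = 1 := by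
  rw [← Complex.exp_conj, ← Complex.exp_add, ← Complex.exp_zero]
  congr 1
  simp only [map_div₀, map_neg, map_mul, Complex.conj_I, Complex.conj_ofNat,
    Complex.conj_natCast, Complex.conj_ofReal]
  ring

lemma Hici_self {Ω : Type*} (N L : ℕ) (h : ℕ → Ω → ℂ) (p : ℕ) (ω : Ω) :
    Hici N L h p p ω = ∑ ℓ ∈ range L, h ℓ ω *
      (Complex.exp (-(2 * (Real.pi : ℂ) * Complex.I * ℓ * p) / N) * (((N - ℓ : ℕ) : ℂ) / N)) := by
  have hphase : ∀ n ℓ : ℕ, 2 * (Real.pi : ℂ) * Complex.I *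
      ((((n * p : ℕ) : ℤ) - ((ℓ * p : ℕ) : ℤ) - ((n * p : ℕ) : ℤ) : ℤ) : ℂ) / N
        = -(2 * (Real.pi : ℂ) * Complex.I * ℓ * p) / N := by
    intro n ℓ
    push_cast
    ring
  simp only [Hici, hphase, mul_sum]
  rw [sum_comm]
  refine sum_congr rfl fun ℓ _ => ?_
  rw [← sum_range_ite_le, sum_div, mul_sum, mul_sum]
  exact sum_congr rfl fun n _ => by ring

theorem stmt1_general {Ω : Type*} [MeasurableSpace Ω] (μ : Measure Ω)
    (N L : ℕ) (hLN : L ≤ N)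
    (ρ : ℕ → ℝ) (hsum : ∑ ℓ ∈ range L, ρ ℓ = 1)
    (h : ℕ → Ω → ℂ)
    (hint : ∀ ℓ ℓ', ℓ < L → ℓ' < L →
      Integrable (fun ω => h ℓ ω * (starRingEnd ℂ) (h ℓ' ω)) μ)
    (hcov : ∀ ℓ ℓ', ℓ < L → ℓ' < L →
      ∫ ω, h ℓ ω * (starRingEnd ℂ) (h ℓ' ω) ∂μ = if ℓ = ℓ' then ((ρ ℓ : ℝ) : ℂ) else 0)
    (p : ℕ) (hp : p < N) :
    ∫ ω, (starRingEnd ℂ) (hBar N L h p ω) * Hici N L h p p ω ∂μ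
      = 1 - ((∑ ℓ ∈ range L, (ℓ : ℝ) * ρ ℓ : ℝ) : ℂ) / (N : ℂ) := by
  have hN : (N : ℂ) ≠ 0 := Nat.cast_ne_zero.mpr (by omega)
  simp only [hBar, Hici_self]
  rw [integral_conj_sum_mul_sum_of_uncorrelated _ h (fun ℓ => (ρ ℓ : ℂ)) _ _
    (fun i hi j hj => hint i j (mem_range.mp hi) (mem_range.mp hj))
    (fun i hi j hj => hcov i j (mem_range.mp hi) (mem_range.mp hj))]
  have hterm : ∀ ℓ ∈ range L, (ρ ℓ : ℂ) * (conj (Complex.exp (-(2 * (Real.pi : ℂ) *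
      Complex.I * ℓ * p) / N)) * (Complex.exp (-(2 * (Real.pi : ℂ) * Complex.I * ℓ * p) / N)
        * (((N - ℓ : ℕ) : ℂ) / N))) = ρ ℓ - ℓ * ρ ℓ / N := by
    intro ℓ hℓ
    rw [← mul_assoc (conj _), conj_exp_phase_mul_self, Nat.cast_sub (by grind)]
    field_simp
  rw [sum_congr rfl hterm, sum_sub_distrib, ← sum_div]
  push_cast
  rw [← Complex.ofReal_sum, hsum, Complex.ofReal_one]

/-- Appendix, equation (12a): `E[conj(h̄(p)) · H̄^{ICI}_{pp}] = 1 - τ_av/N`. -/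
theorem stmt1 {Ω : Type*} [MeasurableSpace Ω] (μ : Measure Ω) [IsProbabilityMeasure μ]
    (N L : ℕ) (hL1 : 1 ≤ L) (hLN : L ≤ N)
    (ρ : ℕ → ℝ) (hnn : ∀ ℓ, 0 ≤ ρ ℓ) (hsum : ∑ ℓ ∈ range L, ρ ℓ = 1)
    (h : ℕ → Ω → ℂ)
    (hint : ∀ ℓ ℓ', ℓ < L → ℓ' < L →
      Integrable (fun ω => h ℓ ω * (starRingEnd ℂ) (h ℓ' ω)) μ)
    (hmean : ∀ ℓ, ℓ < L → ∫ ω, h ℓ ω ∂μ = 0)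
    (hcov : ∀ ℓ ℓ', ℓ < L → ℓ' < L →
      ∫ ω, h ℓ ω * (starRingEnd ℂ) (h ℓ' ω) ∂μ = if ℓ = ℓ' then ((ρ ℓ : ℝ) : ℂ) else 0)
    (p : ℕ) (hp : p < N) :
    ∫ ω, (starRingEnd ℂ) (hBar N L h p ω) * Hici N L h p p ω ∂μ
      = 1 - ((∑ ℓ ∈ range L, (ℓ : ℝ) * ρ ℓ : ℝ) : ℂ) / (N : ℂ) :=
  stmt1_general μ N L hLN ρ hsum h hint hcov p hp
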